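/- Let n ≥ 2, let A be an invertible n×n real matrix, and let c ∈ ℝⁿ with first component c₁ ≠ 0. Let M = (I − (1/c₁) c e₁ᵀ) A and let M̃ be the lower-right (n−1)×(n−1) block of M. Then det(M̃) = (ρᵀ c) / c₁, where ρᵀ = e₁ᵀ adj(A). -/

import Mathlib

open Matrix

/-- The matrix `M = (I − (1/c₁) c e₁ᵀ) A`. -/
noncomputable def Mmat {n : ℕ} (A : Matrix (Fin (n + 2)) (Fin (n + 2)) ℝ)
    (c : Fin (n + 2) → ℝ) : Matrix (Fin (n + 2)) (Fin (n + 2)) ℝ :=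
  ((1 : Matrix (Fin (n + 2)) (Fin (n + 2)) ℝ)
      - (c 0)⁻¹ • Matrix.vecMulVec c (Pi.single 0 1)) * A

/-- `M̃`, the lower-right `(n−1)×(n−1)` block of `M`. -/
noncomputable def Mtilde {n : ℕ} (A : Matrix (Fin (n + 2)) (Fin (n + 2)) ℝ)
    (c : Fin (n + 2) → ℝ) : Matrix (Fin (n + 1)) (Fin (n + 1)) ℝ :=
  (Mmat A c).submatrix Fin.succ Fin.succ

/-!
Adding `e₁ (e₁ᵀ A)` to `M` changes only its first row, and turns it into `E A` with
`E = I + u e₁ᵀ`, `u = e₁ − c / c₁`. So `det M̃` is the `(1,1)` cofactor of `E A`, i.e.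
`(adj A · adj E)₁₁`. Since `e₁ᵀ u = 0`, `E` is unipotent with `adj E = E⁻¹ = I − u e₁ᵀ`, whose
first column is `e₁ − u = c / c₁`; hence `det M̃ = e₁ᵀ adj(A) c / c₁`.
-/

namespace Matrix

variable {R : Type*} [CommRing R]

theorem det_submatrix_succ_succ {n : ℕ} (B : Matrix (Fin (n + 1)) (Fin (n + 1)) R) :
    (B.submatrix Fin.succ Fin.succ).det = B.adjugate 0 0 := by
  rw [adjugate_fin_succ_eq_det_submatrix]
  simp [Fin.succAbove_zero]

theorem submatrix_succ_add_vecMulVec_single_zero {n : ℕ} {m l : Type*}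
    (B : Matrix (Fin (n + 1)) m R) (x : R) (w : m → R) (f : l → m) :
    (B + vecMulVec (Pi.single 0 x) w).submatrix Fin.succ f = B.submatrix Fin.succ f := by
  ext i j
  simp [vecMulVec_apply]

theorem adjugate_one_add_vecMulVec {m : Type*} [Fintype m] [DecidableEq m] {u v : m → R}
    (h : v ⬝ᵥ u = 0) : adjugate (1 + vecMulVec u v) = 1 - vecMulVec u v := by
  have hdet : det (1 + vecMulVec u v) = 1 := by
    rw [vecMulVec_eq Unit, det_one_add_replicateCol_mul_replicateRow, h, add_zero]
  have hinv : (1 + vecMulVec u v) * (1 - vecMulVec u v) = 1 := by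
    rw [Matrix.add_mul, Matrix.mul_sub, Matrix.mul_sub, vecMulVec_mul_vecMulVec, h]
    simp
  calc adjugate (1 + vecMulVec u v)
      = adjugate (1 + vecMulVec u v) * ((1 + vecMulVec u v) * (1 - vecMulVec u v)) := by
        rw [hinv, Matrix.mul_one]
    _ = 1 - vecMulVec u v := by
        rw [← Matrix.mul_assoc, adjugate_mul, hdet, one_smul, Matrix.one_mul]

end Matrix

theorem det_Mtilde_eq (n : ℕ) (A : Matrix (Fin (n + 2)) (Fin (n + 2)) ℝ)
    (c : Fin (n + 2) → ℝ) (hc : c 0 ≠ 0) :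
    (Mtilde A c).det = (A.adjugate.mulVec c) 0 / c 0 := by
  set e : Fin (n + 2) → ℝ := Pi.single 0 1
  set u := e - (c 0)⁻¹ • c
  have hu : e ⬝ᵥ u = 0 := by simp [u, e, hc]
  have hEA : (1 + vecMulVec u e) * A = Mmat A c + vecMulVec e (A.row 0) := by
    simp only [Mmat, u, e, sub_vecMulVec, smul_vecMulVec, Matrix.add_mul, Matrix.sub_mul,
      vecMulVec_mul, single_one_vecMul]
    abel
  calc (Mtilde A c).det
      = ((1 + vecMulVec u e) * A).adjugate 0 0 := by
        rw [← det_submatrix_succ_succ, hEA, submatrix_succ_add_vecMulVec_single_zero]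
        rfl
    _ = (A.adjugate * (1 - vecMulVec u e)) 0 0 := by
        rw [adjugate_mul_distrib, adjugate_one_add_vecMulVec hu]
    _ = (A.adjugate.mulVec c) 0 / c 0 := by
        simp [u, e, Matrix.mul_sub, mul_vecMulVec, mulVec_sub, mulVec_smul, vecMulVec_apply]
        field_simp
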